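/- If a propagator 𝒰(t) on L² satisfies the growth bound ‖𝒰(t)‖_{L²→L²} ≲ ⟨t⟩^{m₀} and commutes appropriately with the generators, then whenever f(t) = 𝒰(t)g with g smooth and polynomially weighted, the quantity Φ_{j,γ}(t) = Σ_{j'≤j, |γ'|≤|γ|} ‖⟨x⟩^{j'}∂^{γ'}_x 𝒰(t)g‖_{L²} satisfies a Gronwall-type bound Φ_{j,|γ|}(t) ≲ ⟨t⟩^K Σ_{|β| ≤ |γ|+j} ‖⟨x⟩^j ∂_x^β g‖_{L²} for some K depending on j, |γ|, m₀, provided d/dt ‖⟨x⟩^{j'}∂^{γ'}_x 𝒰(t)g‖_{L²}² is bounded by commutator terms controlled by lower-order weighted norms times ⟨t⟩². -/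

import Mathlib

/-!
Induction on the weight `j`, the base case being the unweighted growth bound. Differentiating
`N²` and dividing by `2N` (where `N` vanishes it is minimal, so `N' = 0`) turns the commutator
inequality into `|N'_{j+1,k}| ≤ (C₁/2) ⟨t⟩² (N_{j,k+1} + B)`. The induction hypothesis bounds
the right-hand side by a multiple of `⟨t⟩^{K+2} B`, and the mean value inequality on `[0, t]`
integrates this to `N_{j+1,k}(t) ≲ ⟨t⟩^{K+3} B`.
-/

open Real

noncomputable def japaneseBracket (t : ℝ) : ℝ := √(1 + t ^ 2)

lemma one_add_sq_rpow_half (t : ℝ) (K : ℕ) :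
    (1 + t ^ 2) ^ ((K : ℝ) / 2) = japaneseBracket t ^ K := by
  rw [rpow_div_two_eq_sqrt _ (by positivity), rpow_natCast, japaneseBracket]

lemma japaneseBracket_sq (t : ℝ) : japaneseBracket t ^ 2 = 1 + t ^ 2 :=
  sq_sqrt (by positivity)

lemma one_le_japaneseBracket (t : ℝ) : 1 ≤ japaneseBracket t :=
  one_le_sqrt.mpr (by nlinarith)

lemma le_japaneseBracket (t : ℝ) : t ≤ japaneseBracket t :=
  le_sqrt_of_sq_le (by linarith)

lemma japaneseBracket_le_japaneseBracket {s t : ℝ} (hs : 0 ≤ s) (hst : s ≤ t) :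
    japaneseBracket s ≤ japaneseBracket t :=
  sqrt_le_sqrt (by nlinarith)

lemma abs_deriv_le_of_abs_deriv_sq_le {f : ℝ → ℝ} {t c : ℝ} (hf0 : ∀ s, 0 ≤ f s)
    (hf : DifferentiableAt ℝ f t) (hc : 0 ≤ c) (h : |deriv (fun s => f s ^ 2) t| ≤ f t * c) :
    |deriv f t| ≤ c / 2 := by
  rcases (hf0 t).eq_or_lt with h0 | hpos
  · have hmin : IsLocalMin f t :=
      IsMinOn.isLocalMin (fun s _ => h0 ▸ hf0 s) Filter.univ_mem
    rw [hmin.deriv_eq_zero, abs_zero]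
    positivity
  · have hsq : deriv (fun s => f s ^ 2) t = 2 * f t * deriv f t := by
      simpa using (hf.hasDerivAt.fun_pow 2).deriv
    rw [hsq, abs_mul, abs_of_pos (by positivity)] at h
    rw [le_div_iff₀ two_pos]
    nlinarith

lemma le_mul_japaneseBracket_pow_of_deriv_le {f : ℝ → ℝ} {B C : ℝ} {K : ℕ}
    (hf : Differentiable ℝ f) (hB : 0 ≤ B) (hC : 0 ≤ C) (hf0 : f 0 ≤ B)
    (hf' : ∀ τ, 0 ≤ τ → deriv f τ ≤ C * japaneseBracket τ ^ K * B) {t : ℝ} (ht : 0 ≤ t) :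
    f t ≤ (1 + C) * japaneseBracket t ^ (K + 1) * B := by
  set w := japaneseBracket t
  have hw : 1 ≤ w := one_le_japaneseBracket t
  have hmvt : f t - f 0 ≤ C * w ^ K * B * (t - 0) := by
    refine (convex_Icc 0 t).image_sub_le_mul_sub_of_deriv_le hf.continuous.continuousOn
      hf.differentiableOn (fun τ hτ => ?_) 0 (Set.left_mem_Icc.2 ht) t (Set.right_mem_Icc.2 ht) ht
    rw [interior_Icc] at hτ
    refine (hf' τ hτ.1.le).trans ?_
    gcongr
    · exact zero_le_one.trans (one_le_japaneseBracket τ)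
    · exact japaneseBracket_le_japaneseBracket hτ.1.le hτ.2.le
  have hwK : w ^ K * t ≤ w ^ (K + 1) := by
    rw [pow_succ]; gcongr; exact le_japaneseBracket t
  have hB' : B ≤ w ^ (K + 1) * B := le_mul_of_one_le_left hB (one_le_pow₀ hw)
  calc f t ≤ B + C * (w ^ K * t) * B := by linarith
    _ ≤ w ^ (K + 1) * B + C * w ^ (K + 1) * B := by gcongr
    _ = (1 + C) * w ^ (K + 1) * B := by ring

lemma abs_deriv_le_of_commutator_bound {f g : ℝ → ℝ} {B C₁ C' τ : ℝ} {K : ℕ}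
    (hB : 0 ≤ B) (hC₁ : 0 ≤ C₁) (hf0 : ∀ s, 0 ≤ f s) (hg0 : 0 ≤ g τ)
    (hf : DifferentiableAt ℝ f τ)
    (hcomm : |deriv (fun s => f s ^ 2) τ| ≤ C₁ * (1 + τ ^ 2) * f τ * (g τ + B))
    (hg : g τ ≤ C' * japaneseBracket τ ^ K * B) :
    |deriv f τ| ≤ C₁ / 2 * (C' + 1) * japaneseBracket τ ^ (K + 2) * B := by
  set w := japaneseBracket τ
  have hB' : B ≤ w ^ K * B := le_mul_of_one_le_left hB (one_le_pow₀ (one_le_japaneseBracket τ))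
  calc |deriv f τ| ≤ C₁ * w ^ 2 * (g τ + B) / 2 := by
        refine abs_deriv_le_of_abs_deriv_sq_le hf0 hf (by positivity) ?_
        rw [japaneseBracket_sq]
        linarith
    _ ≤ C₁ * w ^ 2 * (C' * w ^ K * B + w ^ K * B) / 2 := by gcongr
    _ = C₁ / 2 * (C' + 1) * w ^ (K + 2) * B := by ring

/-- abstract polynomial weighted-norm propagation (Gronwall-type) lemma.
Here `N j k t` stands for the weighted norm `‖⟨x⟩^j ∂_x^k 𝒰(t)g‖_{L²}` of the
propagated state and `B` for `Σ_{|β|≤|γ|+j}‖⟨x⟩^j ∂_x^β g‖_{L²}`. Given the `L²`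
growth bound `‖𝒰(t)‖ ≲ ⟨t⟩^{m₀}` (encoded as the unweighted bound `hgrow`) and the
commutator differential inequality in which each commutation lowers the weight by one,
raises the derivative count by one, and costs a factor `⟨t⟩²`, every weighted norm
grows at most polynomially: `N j k t ≲ ⟨t⟩^K B` for some `K = K(j,k,m₀)`. -/
theorem weighted_norm_polynomial_growth
    (N : ℕ → ℕ → ℝ → ℝ) (B C₀ C₁ : ℝ) (m₀ : ℕ)
    (hB : 0 ≤ B) (hC₀ : 0 ≤ C₀) (hC₁ : 0 ≤ C₁)
    (hNpos : ∀ j k t, 0 ≤ N j k t)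
    (hNdiff : ∀ j k, Differentiable ℝ (N j k))
    (hinit : ∀ j k, N j k 0 ≤ B)
    -- `L²` growth bound for the unweighted norms: `‖𝒰(t)g‖_{H^k} ≲ ⟨t⟩^{m₀} B`
    (hgrow : ∀ k t, N 0 k t ≤ C₀ * (1 + t ^ 2) ^ ((m₀ : ℝ) / 2) * B)
    -- commutator differential inequality
    (hderiv : ∀ j k t, 1 ≤ j →
      |deriv (fun τ => (N j k τ) ^ 2) t|
        ≤ C₁ * (1 + t ^ 2) * N j k t * (N (j - 1) (k + 1) t + B)) :
    ∀ j k : ℕ, ∃ (K : ℕ) (C' : ℝ), 0 ≤ C' ∧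
      ∀ t : ℝ, 0 ≤ t → N j k t ≤ C' * (1 + t ^ 2) ^ ((K : ℝ) / 2) * B := by
  simp only [one_add_sq_rpow_half] at hgrow ⊢
  intro j
  induction j with
  | zero => exact fun k => ⟨m₀, C₀, hC₀, fun t _ => hgrow k t⟩
  | succ j ih =>
    intro k
    obtain ⟨K, C', hC', hN⟩ := ih (k + 1)
    refine ⟨K + 3, 1 + C₁ / 2 * (C' + 1), by positivity, fun t ht => ?_⟩
    refine le_mul_japaneseBracket_pow_of_deriv_le (hNdiff _ _) hB (by positivity) (hinit _ _)
      (fun τ hτ => (le_abs_self _).trans ?_) ht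
    exact abs_deriv_le_of_commutator_bound hB hC₁ (hNpos _ _) (hNpos _ _ _)
      (hNdiff _ _ τ) (hderiv _ _ _ j.succ_pos) (hN τ hτ)
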